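/- Let m ≥ 1 and let Σ be an m×m real positive definite matrix with unit diagonal (Σ_ii = 1) and off-diagonal entries Σ_ij ∈ [−1/m, 1]. Let X = (X_1,…,X_m) be a centered multivariate Gaussian vector with covariance Σ and set P_i = Φ(−X_i) for i = 1,…,m. Then the arithmetic average P̄ = (1/m) Σ_{i=1}^m P_i satisfies Pr(P̄ ≤ α) ≤ α for every α ∈ (0, 1/(2m)). -/

import Mathlib

/-!
On the event `P̄ ≤ α` every `P_i` is at most `m α < 1/2`, so every `X_i` is positive. On the
positive half-line `x ↦ Φ(-x)` is convex, so Jensen's inequality gives `Φ(-X̄) ≤ P̄ ≤ α` for the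
mean `X̄` of the `X_i`. The mean is a centered Gaussian of variance at most `1`, since the `X_i`
have unit variance. For `α < 1/2`, shrinking the variance of a centered Gaussian `Y` only
decreases `Pr(Φ(-Y) ≤ α)`, and for a standard Gaussian this probability is exactly `α`.
-/

open MeasureTheory ProbabilityTheory

/-- Standard normal CDF `Φ`. -/
noncomputable def Phi (x : ℝ) : ℝ := ((gaussianReal 0 1 : Measure ℝ) (Set.Iic x)).toReal

/-- Law of a centered Gaussian vector `X = A Z` with `Z` i.i.d. standard normal,
so that `X` has covariance `A Aᵀ`. -/
noncomputable def gaussianVec (m : ℕ) (A : Matrix (Fin m) (Fin m) ℝ) :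
    Measure (Fin m → ℝ) :=
  (Measure.pi fun _ : Fin m => (gaussianReal 0 1 : Measure ℝ)).map A.mulVec

open Set Filter Topology Matrix Finset

lemma Phi_eq_cdf (x : ℝ) : Phi x = cdf (gaussianReal 0 1) x := (cdf_eq_real _ x).symm

lemma ofReal_Phi (x : ℝ) : ENNReal.ofReal (Phi x) = gaussianReal 0 1 (Iic x) := by
  rw [Phi_eq_cdf, ofReal_cdf]

lemma Phi_nonneg (x : ℝ) : 0 ≤ Phi x := ENNReal.toReal_nonneg

lemma tendsto_Phi_atTop : Tendsto Phi atTop (𝓝 1) := by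
  simpa only [funext Phi_eq_cdf] using tendsto_cdf_atTop _

lemma tendsto_Phi_atBot : Tendsto Phi atBot (𝓝 0) := by
  simpa only [funext Phi_eq_cdf] using tendsto_cdf_atBot _

lemma Phi_eq_integral (x : ℝ) : Phi x = ∫ t in Iic x, gaussianPDFReal 0 1 t := by
  rw [Phi, gaussianReal_apply 0 one_ne_zero, integral_eq_lintegral_of_nonneg_ae
    (ae_of_all _ (gaussianPDFReal_nonneg 0 1)) (by fun_prop)]
  rfl

lemma hasDerivAt_Phi (x : ℝ) : HasDerivAt Phi (gaussianPDFReal 0 1 x) x := by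
  have hint := integrable_gaussianPDFReal 0 1
  have hcont : Continuous (gaussianPDFReal 0 1) := by unfold gaussianPDFReal; fun_prop
  have hPhi : Phi = fun y => Phi 0 + ∫ t in (0 : ℝ)..y, gaussianPDFReal 0 1 t := by
    ext y
    rw [Phi_eq_integral, Phi_eq_integral,
      ← intervalIntegral.integral_Iic_sub_Iic hint.integrableOn hint.integrableOn]
    ring
  rw [hPhi]
  exact (intervalIntegral.integral_hasDerivAt_right hint.intervalIntegrable
    hcont.stronglyMeasurable.stronglyMeasurableAtFilter hcont.continuousAt).const_add _

lemma continuous_Phi : Continuous Phi :=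
  continuous_iff_continuousAt.2 fun x => (hasDerivAt_Phi x).continuousAt

lemma strictMono_Phi : StrictMono Phi :=
  strictMono_of_hasDerivAt_pos hasDerivAt_Phi fun x => gaussianPDFReal_pos 0 1 x one_ne_zero

lemma gaussianReal_zero_one_map_neg : (gaussianReal 0 1).map (fun y => -y) = gaussianReal 0 1 := by
  simpa using gaussianReal_map_neg (μ := 0) (v := 1)

lemma Phi_neg (x : ℝ) : Phi (-x) = 1 - Phi x := by
  have hIci : Phi (-x) = (gaussianReal 0 1).real (Ici x) := by
    rw [Phi, ← measureReal_def]
    nth_rw 1 [← gaussianReal_zero_one_map_neg]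
    rw [map_measureReal_apply measurable_neg measurableSet_Iic]
    congr 1
    ext y
    simp
  have := nullSingletonClass_gaussianReal (μ := 0) (v := 1) one_ne_zero
  rw [hIci, ← compl_Iio, probReal_compl_eq_one_sub measurableSet_Iio,
    measureReal_congr Iio_ae_eq_Iic]
  rfl

lemma Phi_zero : Phi 0 = 1 / 2 := by
  linarith [neg_zero (G := ℝ) ▸ Phi_neg 0]

lemma pos_of_Phi_neg_lt_half {x : ℝ} (h : Phi (-x) < 1 / 2) : 0 < x := by
  rw [← Phi_zero] at h
  simpa using strictMono_Phi.lt_iff_lt.mp h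

lemma convexOn_Phi_neg : ConvexOn ℝ (Ici 0) fun x => Phi (-x) := by
  have hderiv (x : ℝ) : HasDerivAt (fun y => Phi (-y)) (-gaussianPDFReal 0 1 (-x)) x := by
    simpa [Function.comp_def] using (hasDerivAt_Phi (-x)).comp x (hasDerivAt_neg x)
  refine MonotoneOn.convexOn_of_deriv (convex_Ici 0)
    (continuous_Phi.comp continuous_neg).continuousOn
    (fun x _ => (hderiv x).differentiableAt.differentiableWithinAt) ?_
  rw [interior_Ici, funext fun x => (hderiv x).deriv]
  intro x hx y _ hxy
  simp only [gaussianPDFReal, neg_le_neg_iff, sub_zero, neg_sq]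
  gcongr
  exact le_of_lt hx

lemma Phi_neg_mean_le_mean_Phi_neg {ι : Type*} [Fintype ι] [Nonempty ι] {x : ι → ℝ}
    (hx : ∀ i, 0 ≤ x i) :
    Phi (-((Fintype.card ι : ℝ)⁻¹ * ∑ i, x i)) ≤ (Fintype.card ι : ℝ)⁻¹ * ∑ i, Phi (-(x i)) := by
  have := convexOn_Phi_neg.map_sum_le (t := univ) (w := fun _ => (Fintype.card ι : ℝ)⁻¹) (p := x)
    (fun _ _ => by positivity) (by simp) (fun i _ => hx i)
  simpa [mul_sum] using this

lemma Phi_neg_mean_le_of_mean_Phi_neg_le {ι : Type*} [Fintype ι] [Nonempty ι] {x : ι → ℝ}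
    {α : ℝ} (hα : Fintype.card ι * α < 1 / 2)
    (hx : (Fintype.card ι : ℝ)⁻¹ * ∑ i, Phi (-(x i)) ≤ α) :
    Phi (-((Fintype.card ι : ℝ)⁻¹ * ∑ i, x i)) ≤ α := by
  have hn : (0 : ℝ) < Fintype.card ι := by exact_mod_cast Fintype.card_pos
  have hsum : ∑ i, Phi (-(x i)) < 1 / 2 :=
    calc ∑ i, Phi (-(x i)) = Fintype.card ι * ((Fintype.card ι : ℝ)⁻¹ * ∑ i, Phi (-(x i))) := by
          field_simp
      _ ≤ Fintype.card ι * α := by gcongr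
      _ < 1 / 2 := hα
  have hpos (i : ι) : 0 ≤ x i :=
    (pos_of_Phi_neg_lt_half
      ((single_le_sum (fun j _ => Phi_nonneg (-(x j))) (mem_univ i)).trans_lt hsum)).le
  exact (Phi_neg_mean_le_mean_Phi_neg hpos).trans hx

lemma gaussianReal_setOf_Phi_neg_le {α : ℝ} (hα0 : 0 < α) (hα1 : α < 1) :
    gaussianReal 0 1 {z | Phi (-z) ≤ α} = ENNReal.ofReal α := by
  obtain ⟨q, rfl⟩ : α ∈ range Phi := mem_range_of_exists_le_of_exists_ge continuous_Phi
    ((tendsto_Phi_atBot.eventually (gt_mem_nhds hα0)).exists.imp fun _ => le_of_lt)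
    ((tendsto_Phi_atTop.eventually (lt_mem_nhds hα1)).exists.imp fun _ => le_of_lt)
  have hset : {z | Phi (-z) ≤ Phi q} = (fun z => -z) ⁻¹' Iic q := by
    ext z
    simp [strictMono_Phi.le_iff_le, neg_le]
  rw [hset, ← Measure.map_apply measurable_neg measurableSet_Iic, gaussianReal_zero_one_map_neg,
    ofReal_Phi]

lemma measurableSet_setOf_Phi_neg_le (α : ℝ) : MeasurableSet {y | Phi (-y) ≤ α} :=
  measurableSet_le (continuous_Phi.measurable.comp measurable_neg) measurable_const

lemma Phi_neg_le_of_Phi_neg_mul_le {σ z α : ℝ} (hσ0 : 0 ≤ σ) (hσ1 : σ ≤ 1) (hα : α < 1 / 2)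
    (h : Phi (-(σ * z)) ≤ α) : Phi (-z) ≤ α := by
  have hσz : 0 < σ * z := pos_of_Phi_neg_lt_half (h.trans_lt hα)
  have hz : 0 < z := pos_of_mul_pos_right hσz hσ0
  exact (strictMono_Phi.monotone (by nlinarith)).trans h

lemma gaussianReal_setOf_Phi_neg_le_of_le_one {v : NNReal} (hv : v ≤ 1) {α : ℝ} (hα0 : 0 < α)
    (hα : α < 1 / 2) :
    gaussianReal 0 v {y | Phi (-y) ≤ α} ≤ ENNReal.ofReal α := by
  have hscale : (gaussianReal 0 1).map (√(v : ℝ) * ·) = gaussianReal 0 v := by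
    rw [gaussianReal_map_const_mul]
    congr 1
    · ring
    · ext
      simp
  calc gaussianReal 0 v {y | Phi (-y) ≤ α}
      = gaussianReal 0 1 {z | Phi (-(√(v : ℝ) * z)) ≤ α} := by
        rw [← hscale, Measure.map_apply (measurable_const_mul _) (measurableSet_setOf_Phi_neg_le α)]
        rfl
    _ ≤ gaussianReal 0 1 {z | Phi (-z) ≤ α} := measure_mono fun z =>
        Phi_neg_le_of_Phi_neg_mul_le (Real.sqrt_nonneg _) (Real.sqrt_le_one.mpr hv) hα
    _ = ENNReal.ofReal α := gaussianReal_setOf_Phi_neg_le hα0 (by linarith)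

lemma map_pi_gaussianReal_dotProduct {ι : Type*} [Fintype ι] (c : ι → ℝ) :
    (Measure.pi fun _ : ι => gaussianReal 0 1).map (c ⬝ᵥ ·)
      = gaussianReal 0 (c ⬝ᵥ c).toNNReal := by
  have h : (c ⬝ᵥ ·) = innerSL ℝ (WithLp.toLp 2 c) ∘ WithLp.toLp 2 := by
    ext z
    simp [EuclideanSpace.inner_toLp_toLp, dotProduct_comm]
  rw [h, ← Measure.map_map (by fun_prop) (by fun_prop), map_pi_eq_stdGaussian,
    IsGaussian.map_eq_gaussianReal, integral_strongDual_stdGaussian, variance_dual_stdGaussian,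
    innerSL_apply_norm, ← real_inner_self_eq_norm_sq, EuclideanSpace.inner_toLp_toLp]
  simp

lemma gaussianVec_map_dotProduct (m : ℕ) (A : Matrix (Fin m) (Fin m) ℝ) (w : Fin m → ℝ) :
    (gaussianVec m A).map (w ⬝ᵥ ·) = gaussianReal 0 ((w ᵥ* A) ⬝ᵥ (w ᵥ* A)).toNNReal := by
  have : (w ⬝ᵥ ·) ∘ A.mulVec = ((w ᵥ* A) ⬝ᵥ ·) := funext fun z => dotProduct_mulVec w A z
  rw [gaussianVec, Measure.map_map (by fun_prop) (by fun_prop), this,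
    map_pi_gaussianReal_dotProduct]

/-- Cauchy–Schwarz: the average of vectors of unit length has length at most `1`. -/
lemma vecMul_const_dotProduct_self_le_one {ι κ : Type*} [Fintype ι] [Fintype κ]
    (A : Matrix ι κ ℝ) (hA : ∀ i, (A * Aᵀ) i i = 1) :
    (Function.const ι (Fintype.card ι : ℝ)⁻¹ ᵥ* A) ⬝ᵥ
      (Function.const ι (Fintype.card ι : ℝ)⁻¹ ᵥ* A) ≤ 1 := by
  set n := (Fintype.card ι : ℝ)
  have hrows : ∑ j, ∑ i, A i j ^ 2 = n := by
    have hrow (i : ι) : ∑ j, A i j ^ 2 = 1 := by simpa [mul_apply, sq] using hA i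
    simp [sum_comm (γ := κ), hrow, n]
  calc _ = n⁻¹ ^ 2 * ∑ j, (∑ i, A i j) ^ 2 := by
        simp [dotProduct, vecMul, ← mul_sum, mul_pow, ← sq]
    _ ≤ n⁻¹ ^ 2 * ∑ j, n * ∑ i, A i j ^ 2 := by
        gcongr
        exact sq_sum_le_card_mul_sum_sq
    _ = (n⁻¹ * n) ^ 2 := by rw [← mul_sum, hrows]; ring
    _ ≤ 1 := by rcases eq_or_ne n 0 with h | h <;> simp [h]

theorem stmt_7_general (m : ℕ)
    (Sig : Matrix (Fin m) (Fin m) ℝ)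
    (hdiag : ∀ i, Sig i i = 1)
    (A : Matrix (Fin m) (Fin m) ℝ) (hA : A * A.transpose = Sig)
    (α : ℝ) (hα : α ∈ Set.Ioo (0:ℝ) (1 / (2 * m))) :
    gaussianVec m A {x : Fin m → ℝ | (1 / m : ℝ) * ∑ i : Fin m, Phi (-(x i)) ≤ α}
      ≤ ENNReal.ofReal α := by
  obtain ⟨hα0, hαm⟩ := hα
  have hm : 0 < m := by
    have : (0 : ℝ) < 2 * m := one_div_pos.mp (hα0.trans hαm)
    exact_mod_cast (by linarith : (0 : ℝ) < m)
  have : Nonempty (Fin m) := Fin.pos_iff_nonempty.mp hm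
  have hm1 : (1 : ℝ) ≤ m := by exact_mod_cast hm
  have hmα : (m : ℝ) * α < 1 / 2 := by
    rw [lt_div_iff₀ (by positivity)] at hαm
    linarith
  set w : Fin m → ℝ := Function.const _ (m : ℝ)⁻¹
  have hmean (x : Fin m → ℝ) : (m : ℝ)⁻¹ * ∑ i, x i = w ⬝ᵥ x := by simp [w, dotProduct, mul_sum]
  calc gaussianVec m A {x : Fin m → ℝ | (1 / m : ℝ) * ∑ i : Fin m, Phi (-(x i)) ≤ α}
      ≤ gaussianVec m A ((w ⬝ᵥ ·) ⁻¹' {y | Phi (-y) ≤ α}) := measure_mono fun x hx => by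
        simpa [hmean] using Phi_neg_mean_le_of_mean_Phi_neg_le (x := x)
          (by simpa using hmα) (by simpa using hx)
    _ = gaussianReal 0 ((w ᵥ* A) ⬝ᵥ (w ᵥ* A)).toNNReal {y | Phi (-y) ≤ α} := by
        rw [← gaussianVec_map_dotProduct,
          Measure.map_apply (by fun_prop) (measurableSet_setOf_Phi_neg_le α)]
    _ ≤ ENNReal.ofReal α := by
        refine gaussianReal_setOf_Phi_neg_le_of_le_one (Real.toNNReal_le_one.mpr ?_) hα0
          (by nlinarith)
        simpa using vecMul_const_dotProduct_self_le_one A fun i => hA ▸ hdiag i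

/-- if `Σ` is a positive definite correlation matrix with off-diagonal
entries in `[-1/m,1]` and `X ~ N(0,Σ)`, `P_i = Φ(-X_i)`, then the arithmetic average
`P̄ = (1/m)Σ P_i` satisfies `Pr(P̄ ≤ α) ≤ α` for every `α ∈ (0, 1/(2m))`. -/
theorem stmt_7 (m : ℕ) (hm : 1 ≤ m)
    (Sig : Matrix (Fin m) (Fin m) ℝ)
    (hpd : Sig.PosDef) (hdiag : ∀ i, Sig i i = 1)
    (hoff : ∀ i j, i ≠ j → Sig i j ∈ Set.Icc (-(1:ℝ) / m) 1)
    (A : Matrix (Fin m) (Fin m) ℝ) (hA : A * A.transpose = Sig)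
    (α : ℝ) (hα : α ∈ Set.Ioo (0:ℝ) (1 / (2 * m))) :
    gaussianVec m A {x : Fin m → ℝ | (1 / m : ℝ) * ∑ i : Fin m, Phi (-(x i)) ≤ α}
      ≤ ENNReal.ofReal α :=
  stmt_7_general m Sig hdiag A hA α hα
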